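/- arXiv:1008.2372 — 2 statements merged into one kernel-verified Lean document; each statement's English description precedes it below -/
import Mathlib

section
/- Let g : ℝ → ℝ be continuous with g(x) > 0 for x > 0, and let F : ℝ → ℝ be continuous with F(x) < 0 for 0 < x < a₁ and F(0) = F(a₁) = 0, where a₁ > 0. Let u, w : [0, a₁] → ℝ be differentiable with w(x) < u(x) < F(x) ≤ 0 for all x ∈ (0, a₁) (and u, w < 0 at the endpoints), satisfying u'(x) = −g(x)/(u(x) − F(x)) and w'(x) = −g(x)/(w(x) − F(x)) (graphs of trajectory arcs lying below the curve y = F(x) in the region y < 0). Then ∫₀^{a₁} F(x) u'(x) dx < ∫₀^{a₁} F(x) w'(x) dx < 0; equivalently, the line integral ∫ F dy along such an arc, traversed in the direction of the flow (from x = a₁ to x = 0), is positive and strictly decreases as the arc moves outward. -/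
/-!
Along an arc `y` below the characteristic, `F y' = (-F g) / (y - F)` with `-F g > 0` and
`y - F < 0` on `(0, a₁)`. So the integrand is negative, and it grows as `y` moves down,
because `t ↦ p / t` with `p > 0` decreases on `t < 0`. Integrating these strict pointwise
inequalities gives both claims; the endpoint conditions keep `y - F` away from `0` on the
closed interval, so the integrands are continuous there.
-/

open Set MeasureTheory

lemma lt_on_Icc_of_lt_on_Ioo {f h : ℝ → ℝ} {a b : ℝ} (hIoo : ∀ x ∈ Ioo a b, f x < h x)
    (ha : f a < h a) (hb : f b < h b) : ∀ x ∈ Icc a b, f x < h x := by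
  rintro x ⟨hax, hxb⟩
  rcases hax.eq_or_lt with rfl | hax
  · exact ha
  rcases hxb.lt_or_eq with hxb | rfl
  · exact hIoo x ⟨hax, hxb⟩
  · exact hb

lemma intervalIntegral.integral_lt_integral_of_lt_on_Ioo {f h : ℝ → ℝ} {a b : ℝ}
    (hab : a < b) (hf : IntervalIntegrable f volume a b) (hh : IntervalIntegrable h volume a b)
    (hlt : ∀ x ∈ Ioo a b, f x < h x) : ∫ x in a..b, f x < ∫ x in a..b, h x := by
  rw [← sub_pos, ← intervalIntegral.integral_sub hh hf]
  exact intervalIntegral.intervalIntegral_pos_of_pos_on (hh.sub hf)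
    (fun x hx => sub_pos.mpr (hlt x hx)) hab

lemma mul_neg_div_sub_neg {f c y : ℝ} (hf : f < 0) (hc : 0 < c) (hy : y < f) :
    f * (-c / (y - f)) < 0 :=
  mul_neg_of_neg_of_pos hf (div_pos_of_neg_of_neg (neg_neg_of_pos hc) (sub_neg.mpr hy))

lemma mul_neg_div_sub_lt {f c y₁ y₂ : ℝ} (hf : f < 0) (hc : 0 < c) (hy : y₁ < y₂)
    (hy₂ : y₂ < f) : f * (-c / (y₂ - f)) < f * (-c / (y₁ - f)) := by
  rw [mul_div_assoc', mul_div_assoc', div_eq_mul_one_div _ (y₂ - f),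
    div_eq_mul_one_div _ (y₁ - f)]
  exact mul_lt_mul_of_pos_left (one_div_lt_one_div_of_neg_of_lt (by linarith) (by linarith))
    (mul_pos_of_neg_of_neg hf (neg_neg_of_pos hc))

lemma intervalIntegrable_mul_neg_div_sub {F g y : ℝ → ℝ} {a b : ℝ} (hab : a ≤ b)
    (hF : ContinuousOn F (Icc a b)) (hg : ContinuousOn g (Icc a b))
    (hy : ContinuousOn y (Icc a b)) (hyF : ∀ x ∈ Icc a b, y x < F x) :
    IntervalIntegrable (fun x => F x * (-(g x) / (y x - F x))) volume a b :=
  ContinuousOn.intervalIntegrable_of_Icc hab <|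
    hF.mul (hg.neg.div (hy.sub hF) fun x hx => sub_ne_zero.mpr (hyF x hx).ne)

/-- Monotonicity of the contribution `∫ F dy` along arcs below the characteristic
in the region `0 ≤ x ≤ a₁`, `y < 0`, where `F < 0`: one has
`∫ F u' < ∫ F w' < 0`, i.e. the line integral `∫ F dy` traversed with the flow is
positive and strictly decreases as the arc moves outward. -/
theorem lienard_potential_lower_arc (F g : ℝ → ℝ) (a₁ : ℝ) (ha₁ : 0 < a₁)
    (hg : Continuous g) (hgpos : ∀ x : ℝ, 0 < x → 0 < g x)
    (hF : Continuous F)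
    (hFneg : ∀ x : ℝ, 0 < x → x < a₁ → F x < 0)
    (hF0 : F 0 = 0) (hFa₁ : F a₁ = 0)
    (u w : ℝ → ℝ)
    (hu : ∀ x ∈ Set.Icc (0:ℝ) a₁,
      HasDerivWithinAt u (-(g x) / (u x - F x)) (Set.Icc (0:ℝ) a₁) x)
    (hw : ∀ x ∈ Set.Icc (0:ℝ) a₁,
      HasDerivWithinAt w (-(g x) / (w x - F x)) (Set.Icc (0:ℝ) a₁) x)
    (horder : ∀ x ∈ Set.Ioo (0:ℝ) a₁, w x < u x ∧ u x < F x ∧ F x ≤ 0)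
    (hend : u 0 < 0 ∧ w 0 < 0 ∧ u a₁ < 0 ∧ w a₁ < 0) :
    (∫ x in (0:ℝ)..a₁, F x * (-(g x) / (u x - F x))) <
      (∫ x in (0:ℝ)..a₁, F x * (-(g x) / (w x - F x))) ∧
    (∫ x in (0:ℝ)..a₁, F x * (-(g x) / (w x - F x))) < 0 := by
  obtain ⟨hu0, hw0, hua, hwa⟩ := hend
  have hwF_Ioo : ∀ x ∈ Ioo 0 a₁, w x < F x := fun x hx =>
    (horder x hx).1.trans (horder x hx).2.1
  have huF : ∀ x ∈ Icc 0 a₁, u x < F x :=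
    lt_on_Icc_of_lt_on_Ioo (fun x hx => (horder x hx).2.1) (by rwa [hF0]) (by rwa [hFa₁])
  have hwF : ∀ x ∈ Icc 0 a₁, w x < F x :=
    lt_on_Icc_of_lt_on_Ioo hwF_Ioo (by rwa [hF0]) (by rwa [hFa₁])
  have hIu := intervalIntegrable_mul_neg_div_sub ha₁.le hF.continuousOn hg.continuousOn
    (fun x hx => (hu x hx).continuousWithinAt) huF
  have hIw := intervalIntegrable_mul_neg_div_sub ha₁.le hF.continuousOn hg.continuousOn
    (fun x hx => (hw x hx).continuousWithinAt) hwF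
  constructor
  · exact intervalIntegral.integral_lt_integral_of_lt_on_Ioo ha₁ hIu hIw fun x hx =>
      mul_neg_div_sub_lt (hFneg x hx.1 hx.2) (hgpos x hx.1) (horder x hx).1 (horder x hx).2.1
  · simpa using intervalIntegral.integral_lt_integral_of_lt_on_Ioo ha₁ hIw
      (intervalIntegrable_const (c := (0 : ℝ))) fun x hx =>
        mul_neg_div_sub_neg (hFneg x hx.1 hx.2) (hgpos x hx.1) (hwF_Ioo x hx)
end

section
/- Let g : ℝ → ℝ be continuous with g(x) > 0 for x > 0, and let F : ℝ → ℝ be continuous with F(x) > 0 for a₁ < x < a₂ and F(a₁) = F(a₂) = 0, where 0 < a₁ < a₂. Let u, w : [a₁, a₂] → ℝ be differentiable with w(x) > u(x) > F(x) ≥ 0 for all x ∈ [a₁, a₂], satisfying u'(x) = −g(x)/(u(x) − F(x)) and w'(x) = −g(x)/(w(x) − F(x)) (graphs of trajectory arcs lying above the curve y = F(x)). Then ∫_{a₁}^{a₂} F(x) u'(x) dx < ∫_{a₁}^{a₂} F(x) w'(x) dx < 0: the contribution to ∫ F dy along such an arc is negative and strictly increases as the arc moves outward. -/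
open Set Filter

/-! Since `dy/dx = -g/(y - F) < 0` above the characteristic, the integrand `F · dy/dx` of
`∫ F dy` is `≤ 0` where `F ≥ 0` and strictly negative where `F > 0`; moreover `-g/(y - F)`
increases with `y`, so an outer arc has a pointwise larger integrand. Both inequalities are
strict after integration because the continuous integrands differ at an interior point,
e.g. the midpoint, where `F > 0`. -/

lemma neg_div_sub_lt_neg_div_sub {f g u w : ℝ} (hg : 0 < g) (hfu : f < u) (huw : u < w) :
    -g / (u - f) < -g / (w - f) := by
  rw [neg_div, neg_div, neg_lt_neg_iff]
  exact div_lt_div_of_pos_left hg (sub_pos.2 hfu) (by linarith)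

lemma mul_neg_div_sub_le_mul_neg_div_sub {f g u w : ℝ} (hf : 0 ≤ f) (hg : 0 < g)
    (hfu : f < u) (huw : u < w) :
    f * (-g / (u - f)) ≤ f * (-g / (w - f)) :=
  mul_le_mul_of_nonneg_left (neg_div_sub_lt_neg_div_sub hg hfu huw).le hf

lemma mul_neg_div_sub_nonpos {f g v : ℝ} (hf : 0 ≤ f) (hg : 0 ≤ g) (hfv : f < v) :
    f * (-g / (v - f)) ≤ 0 :=
  mul_nonpos_of_nonneg_of_nonpos hf
    (div_nonpos_of_nonpos_of_nonneg (neg_nonpos.2 hg) (sub_pos.2 hfv).le)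

lemma mul_neg_div_sub_neg_s11 {f g v : ℝ} (hf : 0 < f) (hg : 0 < g) (hfv : f < v) :
    f * (-g / (v - f)) < 0 :=
  mul_neg_of_pos_of_neg hf (div_neg_of_neg_of_pos (neg_neg_of_pos hg) (sub_pos.2 hfv))

lemma ContinuousOn.mul_neg_div_sub {F g v : ℝ → ℝ} {s : Set ℝ} (hF : ContinuousOn F s)
    (hg : ContinuousOn g s) (hv : ContinuousOn v s) (hFv : ∀ x ∈ s, F x < v x) :
    ContinuousOn (fun x => F x * (-(g x) / (v x - F x))) s :=
  hF.mul (hg.neg.div (hv.sub hF) fun x hx => (sub_pos.2 (hFv x hx)).ne')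

section ArcIntegral

variable {F g u w : ℝ → ℝ} {a b c : ℝ}

lemma integral_mul_neg_div_sub_lt (hab : a < b) (hF : ContinuousOn F (Icc a b))
    (hg : ContinuousOn g (Icc a b)) (hu : ContinuousOn u (Icc a b))
    (hw : ContinuousOn w (Icc a b)) (hg_pos : ∀ x ∈ Icc a b, 0 < g x)
    (hF_nonneg : ∀ x ∈ Icc a b, 0 ≤ F x) (hFu : ∀ x ∈ Icc a b, F x < u x)
    (huw : ∀ x ∈ Icc a b, u x < w x) (hc : c ∈ Icc a b) (hFc : 0 < F c) :
    ∫ x in a..b, F x * (-(g x) / (u x - F x)) < ∫ x in a..b, F x * (-(g x) / (w x - F x)) := by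
  have hFw : ∀ x ∈ Icc a b, F x < w x := fun x hx => (hFu x hx).trans (huw x hx)
  refine intervalIntegral.integral_lt_integral_of_continuousOn_of_le_of_exists_lt hab
    (hF.mul_neg_div_sub hg hu hFu) (hF.mul_neg_div_sub hg hw hFw)
    (fun x hx => ?_) ⟨c, hc, ?_⟩
  · have hx' := Ioc_subset_Icc_self hx
    exact mul_neg_div_sub_le_mul_neg_div_sub (hF_nonneg x hx') (hg_pos x hx') (hFu x hx')
      (huw x hx')
  · exact mul_lt_mul_of_pos_left (neg_div_sub_lt_neg_div_sub (hg_pos c hc) (hFu c hc)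
      (huw c hc)) hFc

lemma integral_mul_neg_div_sub_neg (hab : a < b) (hF : ContinuousOn F (Icc a b))
    (hg : ContinuousOn g (Icc a b)) (hw : ContinuousOn w (Icc a b))
    (hg_pos : ∀ x ∈ Icc a b, 0 < g x) (hF_nonneg : ∀ x ∈ Icc a b, 0 ≤ F x)
    (hFw : ∀ x ∈ Icc a b, F x < w x) (hc : c ∈ Icc a b) (hFc : 0 < F c) :
    ∫ x in a..b, F x * (-(g x) / (w x - F x)) < 0 := by
  have h := intervalIntegral.integral_lt_integral_of_continuousOn_of_le_of_exists_lt hab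
    (hF.mul_neg_div_sub hg hw hFw) continuousOn_const
    (fun x hx => mul_neg_div_sub_nonpos (hF_nonneg x (Ioc_subset_Icc_self hx))
      (hg_pos x (Ioc_subset_Icc_self hx)).le (hFw x (Ioc_subset_Icc_self hx)))
    ⟨c, hc, mul_neg_div_sub_neg_s11 hFc (hg_pos c hc) (hFw c hc)⟩
  simpa using h

end ArcIntegral

theorem lienard_potential_middle_arc_general (F g : ℝ → ℝ) (a₁ a₂ : ℝ)
    (ha₁ : 0 < a₁) (ha₁₂ : a₁ < a₂)
    (hg : Continuous g) (hgpos : ∀ x : ℝ, 0 < x → 0 < g x)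
    (hF : Continuous F)
    (hFpos : ∀ x : ℝ, a₁ < x → x < a₂ → 0 < F x)
    (u w : ℝ → ℝ)
    (hu : ∀ x ∈ Set.Icc a₁ a₂,
      HasDerivWithinAt u (-(g x) / (u x - F x)) (Set.Icc a₁ a₂) x)
    (hw : ∀ x ∈ Set.Icc a₁ a₂,
      HasDerivWithinAt w (-(g x) / (w x - F x)) (Set.Icc a₁ a₂) x)
    (horder : ∀ x ∈ Set.Icc a₁ a₂, 0 ≤ F x ∧ F x < u x ∧ u x < w x) :
    (∫ x in a₁..a₂, F x * (-(g x) / (u x - F x))) <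
      (∫ x in a₁..a₂, F x * (-(g x) / (w x - F x))) ∧
    (∫ x in a₁..a₂, F x * (-(g x) / (w x - F x))) < 0 := by
  have hu_cont : ContinuousOn u (Icc a₁ a₂) := fun x hx => (hu x hx).continuousWithinAt
  have hw_cont : ContinuousOn w (Icc a₁ a₂) := fun x hx => (hw x hx).continuousWithinAt
  have hg_pos : ∀ x ∈ Icc a₁ a₂, 0 < g x := fun x hx => hgpos x (ha₁.trans_le hx.1)
  have hmid : (a₁ + a₂) / 2 ∈ Icc a₁ a₂ := ⟨by linarith, by linarith⟩
  have hF_mid : 0 < F ((a₁ + a₂) / 2) := hFpos _ (by linarith) (by linarith)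
  exact ⟨integral_mul_neg_div_sub_lt ha₁₂ hF.continuousOn hg.continuousOn hu_cont hw_cont
      hg_pos (fun x hx => (horder x hx).1) (fun x hx => (horder x hx).2.1)
      (fun x hx => (horder x hx).2.2) hmid hF_mid,
    integral_mul_neg_div_sub_neg ha₁₂ hF.continuousOn hg.continuousOn hw_cont hg_pos
      (fun x hx => (horder x hx).1) (fun x hx => (horder x hx).2.1.trans (horder x hx).2.2)
      hmid hF_mid⟩

/-- Monotonicity of the contribution `∫ F dy` along arcs above the characteristic
in the region `a₁ ≤ x ≤ a₂`, where `F > 0` between its zeros `a₁ < a₂`: the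
contribution is negative and strictly increases as the arc moves outward. -/
theorem lienard_potential_middle_arc (F g : ℝ → ℝ) (a₁ a₂ : ℝ)
    (ha₁ : 0 < a₁) (ha₁₂ : a₁ < a₂)
    (hg : Continuous g) (hgpos : ∀ x : ℝ, 0 < x → 0 < g x)
    (hF : Continuous F)
    (hFpos : ∀ x : ℝ, a₁ < x → x < a₂ → 0 < F x)
    (hFa₁ : F a₁ = 0) (hFa₂ : F a₂ = 0)
    (u w : ℝ → ℝ)
    (hu : ∀ x ∈ Set.Icc a₁ a₂,
      HasDerivWithinAt u (-(g x) / (u x - F x)) (Set.Icc a₁ a₂) x)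
    (hw : ∀ x ∈ Set.Icc a₁ a₂,
      HasDerivWithinAt w (-(g x) / (w x - F x)) (Set.Icc a₁ a₂) x)
    (horder : ∀ x ∈ Set.Icc a₁ a₂, 0 ≤ F x ∧ F x < u x ∧ u x < w x) :
    (∫ x in a₁..a₂, F x * (-(g x) / (u x - F x))) <
      (∫ x in a₁..a₂, F x * (-(g x) / (w x - F x))) ∧
    (∫ x in a₁..a₂, F x * (-(g x) / (w x - F x))) < 0 :=
  lienard_potential_middle_arc_general F g a₁ a₂ ha₁ ha₁₂ hg hgpos hF hFpos u w hu hw horder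
end
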